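/- Let φ : ℝ → ℝ be a measurable odd function with 0 ≤ φ(x) ≤ 1 for x > 0, φ(x) = 1 for 0 < x ≤ 1, and φ(x) = 0 for x ≥ 2, and let G_φ(z) = (1/(πi))∫_ℝ φ(t)/(z − t) dt for z ∈ ℍ. Let c > 0 and let (x_n), (y_n) be real sequences with y_n > 0, y_n → 0, and |x_n| ≤ c·√(y_n) for all n. Then liminf_{n→∞} |G_φ(x_n + i·y_n)| / log(1/y_n) ≥ 1/π. -/

import Mathlib

open MeasureTheory Real Complex Filter
open scoped Topology

noncomputable section

/-- `G_ψ(z) = (1/(πi)) ∫_ℝ ψ(t)/(z - t) dt`, the analytic extension `ψ + iHψ`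
of an integrable `ψ : ℝ → ℝ` to the upper half-plane. -/
noncomputable def UHG (ψ : ℝ → ℝ) (z : ℂ) : ℂ :=
  ((Real.pi : ℂ) * Complex.I)⁻¹ • ∫ t : ℝ, ((ψ t : ℂ) / (z - (t : ℂ)))

/-- The hypotheses on the bump function `φ`: measurable, odd, `0 ≤ φ ≤ 1` on `(0,∞)`,
`φ = 1` on `(0,1]` and `φ = 0` on `[2,∞)`. -/
def IsPhi (φ : ℝ → ℝ) : Prop :=
  Measurable φ ∧ (∀ x : ℝ, φ (-x) = - φ x) ∧ (∀ x : ℝ, 0 < x → 0 ≤ φ x ∧ φ x ≤ 1) ∧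
    (∀ x : ℝ, 0 < x → x ≤ 1 → φ x = 1) ∧ (∀ x : ℝ, 2 ≤ x → φ x = 0)

/-!
On `[-1, 1]` the function `φ` is the sign function, and against the real part
`(x - t) / ((x - t)² + y²)` of `1 / (z - t)` it integrates to
`log |z|² - ½ (log |z - 1|² + log |z + 1|²)`, since `-½ log ((x - t)² + y²)` is an antiderivative
of that kernel. For `|x| ≤ 1/2` the part of the integral outside `[-1, 1]` is bounded, so
`π |G_φ(z)| ≥ -Re ∫ φ(t) / (z - t) dt ≥ log (1 / |z|²) - O(1)`. Along the sequence
`|z_n|² ≤ (c² + 1) y_n`, whence `π |G_φ(z_n)| ≥ log (1 / y_n) - O(1)`.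
-/

open Set

def cauchyKernelRe (z : ℂ) (t : ℝ) : ℝ := (z.re - t) / ((z.re - t) ^ 2 + z.im ^ 2)

lemma re_ofReal_div_sub_ofReal (z : ℂ) (r t : ℝ) :
    ((r : ℂ) / (z - t)).re = r * cauchyKernelRe z t := by
  rw [Complex.div_re, Complex.normSq_apply]
  simp only [ofReal_re, ofReal_im, sub_re, sub_im, cauchyKernelRe]
  ring

lemma continuous_cauchyKernelRe {z : ℂ} (hz : z.im ≠ 0) : Continuous (cauchyKernelRe z) :=
  Continuous.div (by fun_prop) (by fun_prop) fun t => by positivity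

lemma abs_cauchyKernelRe_le_inv (z : ℂ) (t : ℝ) : |cauchyKernelRe z t| ≤ |z.re - t|⁻¹ := by
  rcases eq_or_ne (z.re - t) 0 with h | h
  · simp [cauchyKernelRe, h]
  · calc |cauchyKernelRe z t| = |z.re - t| / ((z.re - t) ^ 2 + z.im ^ 2) := by
          rw [cauchyKernelRe, abs_div, abs_of_nonneg (by positivity : (0 : ℝ) ≤ _ ^ 2 + _ ^ 2)]
      _ ≤ |z.re - t| / |z.re - t| ^ 2 := by
          gcongr
          rw [sq_abs]
          nlinarith [sq_nonneg z.im]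
      _ = |z.re - t|⁻¹ := by field_simp

lemma integral_cauchyKernelRe {z : ℂ} (hz : z.im ≠ 0) (u v : ℝ) :
    ∫ t in u..v, cauchyKernelRe z t =
      (Real.log ((z.re - u) ^ 2 + z.im ^ 2) - Real.log ((z.re - v) ^ 2 + z.im ^ 2)) / 2 := by
  have hderiv (t : ℝ) : HasDerivAt (fun s => -Real.log ((z.re - s) ^ 2 + z.im ^ 2) / 2)
      (cauchyKernelRe z t) t := by
    have hpos : (z.re - t) ^ 2 + z.im ^ 2 ≠ 0 := by positivity
    have h : HasDerivAt (fun s => (z.re - s) ^ 2 + z.im ^ 2) (-2 * (z.re - t)) t := by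
      simpa using (((hasDerivAt_id' t).const_sub z.re).fun_pow 2).add_const (z.im ^ 2)
    refine ((h.log hpos).fun_neg.div_const 2).congr_deriv ?_
    rw [cauchyKernelRe]
    field_simp
  rw [intervalIntegral.integral_eq_sub_of_hasDerivAt (fun t _ => hderiv t)
    ((continuous_cauchyKernelRe hz).intervalIntegrable u v)]
  ring

lemma integrable_ofReal_div_sub_ofReal {ψ : ℝ → ℝ} (hψ : Integrable ψ) {z : ℂ} (hz : z.im ≠ 0) :
    Integrable fun t : ℝ => (ψ t : ℂ) / (z - t) := by
  have hbound (t : ℝ) : ‖(z - t)⁻¹‖ ≤ |z.im|⁻¹ := by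
    rw [norm_inv]
    gcongr
    simpa using abs_im_le_norm (z - t)
  simp_rw [div_eq_mul_inv]
  exact hψ.ofReal.mul_bdd (by fun_prop) (ae_of_all _ hbound)

lemma norm_UHG (ψ : ℝ → ℝ) (z : ℂ) :
    ‖UHG ψ z‖ = ‖∫ t : ℝ, (ψ t : ℂ) / (z - t)‖ / π := by
  rw [UHG, norm_smul, norm_inv, norm_mul, norm_real, norm_I, Real.norm_of_nonneg pi_pos.le,
    mul_one, inv_mul_eq_div]

namespace IsPhi

variable {φ : ℝ → ℝ}

lemma map_zero (hφ : IsPhi φ) : φ 0 = 0 := by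
  have := hφ.2.1 0
  rw [neg_zero] at this
  linarith

lemma abs_le_one (hφ : IsPhi φ) (t : ℝ) : |φ t| ≤ 1 := by
  have hpos (s : ℝ) (hs : 0 < s) : |φ s| ≤ 1 :=
    abs_le.2 ⟨by linarith [(hφ.2.2.1 s hs).1], (hφ.2.2.1 s hs).2⟩
  rcases lt_trichotomy t 0 with ht | rfl | ht
  · simpa [hφ.2.1] using hpos (-t) (neg_pos.2 ht)
  · simp [hφ.map_zero]
  · exact hpos t ht

lemma eq_neg_one (hφ : IsPhi φ) {t : ℝ} (h₁ : -1 ≤ t) (h₀ : t < 0) : φ t = -1 := by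
  have := hφ.2.2.2.1 (-t) (by linarith) (by linarith)
  rw [hφ.2.1] at this
  linarith

lemma eq_zero_of_notMem_Icc (hφ : IsPhi φ) {t : ℝ} (ht : t ∉ Icc (-2) 2) : φ t = 0 := by
  rw [mem_Icc, not_and_or, not_le, not_le] at ht
  rcases ht with ht | ht
  · have := hφ.2.2.2.2 (-t) (by linarith)
    rw [hφ.2.1] at this
    linarith
  · exact hφ.2.2.2.2 t ht.le

lemma abs_le_indicator (hφ : IsPhi φ) (t : ℝ) : |φ t| ≤ (Icc (-2 : ℝ) 2).indicator 1 t := by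
  by_cases ht : t ∈ Icc (-2 : ℝ) 2
  · simpa [ht] using hφ.abs_le_one t
  · simp [ht, hφ.eq_zero_of_notMem_Icc ht]

lemma integrable (hφ : IsPhi φ) : Integrable φ :=
  ((integrable_indicator_iff measurableSet_Icc).2 (integrableOn_const measure_Icc_lt_top.ne)).mono'
    hφ.1.aestronglyMeasurable (ae_of_all _ hφ.abs_le_indicator)

lemma integrable_mul_cauchyKernelRe (hφ : IsPhi φ) {z : ℂ} (hz : z.im ≠ 0) :
    Integrable fun t => φ t * cauchyKernelRe z t :=
  (integrable_ofReal_div_sub_ofReal hφ.integrable hz).re.congr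
    (ae_of_all _ fun t => re_ofReal_div_sub_ofReal z (φ t) t)

lemma setIntegral_Ioc_mul_cauchyKernelRe (hφ : IsPhi φ) {z : ℂ} (hz : z.im ≠ 0) :
    ∫ t in Ioc (-1) 1, φ t * cauchyKernelRe z t =
      (∫ t in (0)..1, cauchyKernelRe z t) - ∫ t in (-1)..0, cauchyKernelRe z t := by
  have hpos : ∫ t in Ioc 0 1, φ t * cauchyKernelRe z t = ∫ t in (0)..1, cauchyKernelRe z t := by
    rw [intervalIntegral.integral_of_le zero_le_one]
    refine setIntegral_congr_fun measurableSet_Ioc fun t ht => ?_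
    simp [hφ.2.2.2.1 t ht.1 ht.2]
  have hneg : ∫ t in Ioc (-1) 0, φ t * cauchyKernelRe z t =
      -∫ t in (-1)..0, cauchyKernelRe z t := by
    rw [intervalIntegral.integral_of_le (by norm_num), ← integral_neg,
      integral_Ioc_eq_integral_Ioo, integral_Ioc_eq_integral_Ioo]
    refine setIntegral_congr_fun measurableSet_Ioo fun t ht => ?_
    simp [hφ.eq_neg_one ht.1.le ht.2]
  have hint := (hφ.integrable_mul_cauchyKernelRe hz).integrableOn (s := Ioc (-1) 1)
  rw [← Ioc_union_Ioc_eq_Ioc (by norm_num : (-1 : ℝ) ≤ 0) zero_le_one,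
    setIntegral_union (Ioc_disjoint_Ioc_of_le le_rfl) measurableSet_Ioc
      (hint.mono_set (Ioc_subset_Ioc_right (by norm_num)))
      (hint.mono_set (Ioc_subset_Ioc_left (by norm_num))), hneg, hpos]
  ring

lemma mul_cauchyKernelRe_le (hφ : IsPhi φ) {z : ℂ} (hre : |z.re| ≤ 1 / 2) {t : ℝ}
    (ht : t ∉ Ioc (-1) 1) : φ t * cauchyKernelRe z t ≤ 2 * (Icc (-2 : ℝ) 2).indicator 1 t := by
  have hfar : 2⁻¹ ≤ |z.re - t| := by
    rw [mem_Ioc, not_and_or, not_lt, not_le] at ht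
    obtain ⟨h₁, h₂⟩ := abs_le.1 hre
    rcases ht with ht | ht
    · exact le_abs.2 (Or.inl (by linarith))
    · exact le_abs.2 (Or.inr (by linarith))
  calc φ t * cauchyKernelRe z t ≤ |φ t| * |cauchyKernelRe z t| := by
        rw [← abs_mul]
        exact le_abs_self _
    _ ≤ (Icc (-2 : ℝ) 2).indicator 1 t * 2 :=
        mul_le_mul (hφ.abs_le_indicator t)
          ((abs_cauchyKernelRe_le_inv z t).trans (inv_le_of_inv_le₀ (by norm_num) hfar))
          (abs_nonneg _) (indicator_nonneg (fun _ _ => zero_le_one) t)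
    _ = 2 * (Icc (-2 : ℝ) 2).indicator 1 t := mul_comm _ _

lemma setIntegral_compl_Ioc_mul_cauchyKernelRe_le (hφ : IsPhi φ) {z : ℂ} (hz : z.im ≠ 0)
    (hre : |z.re| ≤ 1 / 2) : ∫ t in (Ioc (-1) 1)ᶜ, φ t * cauchyKernelRe z t ≤ 8 := by
  have hind : Integrable fun t => (2 : ℝ) * (Icc (-2 : ℝ) 2).indicator 1 t :=
    ((integrable_indicator_iff measurableSet_Icc).2
      (integrableOn_const measure_Icc_lt_top.ne)).const_mul 2
  calc ∫ t in (Ioc (-1) 1)ᶜ, φ t * cauchyKernelRe z t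
      ≤ ∫ t in (Ioc (-1) 1)ᶜ, 2 * (Icc (-2 : ℝ) 2).indicator 1 t :=
        setIntegral_mono_on (hφ.integrable_mul_cauchyKernelRe hz).integrableOn hind.integrableOn
          measurableSet_Ioc.compl fun t ht => hφ.mul_cauchyKernelRe_le hre ht
    _ ≤ ∫ t, 2 * (Icc (-2 : ℝ) 2).indicator 1 t :=
        setIntegral_le_integral hind (ae_of_all _ fun t =>
          mul_nonneg zero_le_two (indicator_nonneg (fun _ _ => zero_le_one) t))
    _ = 8 := by
        rw [integral_const_mul, integral_indicator_one measurableSet_Icc, Real.volume_real_Icc]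
        norm_num

lemma integral_mul_cauchyKernelRe_le (hφ : IsPhi φ) {z : ℂ} (hz : z.im ≠ 0)
    (hre : |z.re| ≤ 1 / 2) : ∫ t, φ t * cauchyKernelRe z t ≤ Real.log (normSq z) + 11 := by
  have hlog {s : ℝ} (hs : 1 / 4 ≤ s) : -3 ≤ Real.log s := by
    have hs₀ : 0 < s := by linarith
    have : s⁻¹ ≤ 4 := by rw [inv_le_comm₀ hs₀ (by norm_num)]; linarith
    linarith [Real.one_sub_inv_le_log_of_pos hs₀]
  obtain ⟨h₁, h₂⟩ := abs_le.1 hre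
  have hright := hlog (show 1 / 4 ≤ (z.re - 1) ^ 2 + z.im ^ 2 by nlinarith [sq_nonneg z.im])
  have hleft := hlog (show 1 / 4 ≤ (z.re - -1) ^ 2 + z.im ^ 2 by nlinarith [sq_nonneg z.im])
  have hnormSq : normSq z = (z.re - 0) ^ 2 + z.im ^ 2 := by rw [normSq_apply]; ring
  rw [← integral_add_compl measurableSet_Ioc (hφ.integrable_mul_cauchyKernelRe hz),
    hφ.setIntegral_Ioc_mul_cauchyKernelRe hz, integral_cauchyKernelRe hz,
    integral_cauchyKernelRe hz, hnormSq]
  linarith [hφ.setIntegral_compl_Ioc_mul_cauchyKernelRe_le hz hre]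

lemma neg_log_normSq_sub_le_pi_mul_norm_UHG (hφ : IsPhi φ) {z : ℂ} (hz : z.im ≠ 0)
    (hre : |z.re| ≤ 1 / 2) : -Real.log (normSq z) - 11 ≤ π * ‖UHG φ z‖ := by
  have hint := integrable_ofReal_div_sub_ofReal hφ.integrable hz
  have hre_int : (∫ t : ℝ, (φ t : ℂ) / (z - t)).re = ∫ t, φ t * cauchyKernelRe z t := by
    rw [← RCLike.re_to_complex, ← integral_re hint]
    exact integral_congr_ae (ae_of_all _ fun t => re_ofReal_div_sub_ofReal z (φ t) t)
  rw [norm_UHG, mul_div_cancel₀ _ pi_ne_zero]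
  calc -Real.log (normSq z) - 11 ≤ -(∫ t : ℝ, (φ t : ℂ) / (z - t)).re := by
        rw [hre_int]
        linarith [hφ.integral_mul_cauchyKernelRe_le hz hre]
    _ ≤ ‖∫ t : ℝ, (φ t : ℂ) / (z - t)‖ := (neg_le_abs _).trans (abs_re_le_norm _)

end IsPhi

lemma log_sq_add_sq_le {x y c : ℝ} (hy : 0 < y) (hy₁ : y ≤ 1) (hx : |x| ≤ c * √y) :
    Real.log (x ^ 2 + y ^ 2) ≤ Real.log (c ^ 2 + 1) - Real.log (1 / y) := by
  have hsq : x ^ 2 + y ^ 2 ≤ (c ^ 2 + 1) * y := by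
    have := pow_le_pow_left₀ (abs_nonneg x) hx 2
    rw [sq_abs, mul_pow, sq_sqrt hy.le] at this
    nlinarith
  rw [one_div, Real.log_inv, sub_neg_eq_add, ← Real.log_mul (by positivity) hy.ne']
  exact Real.log_le_log (by positivity) hsq

theorem stmt_12_general (φ : ℝ → ℝ) (hφ : IsPhi φ) (c : ℝ) (x y : ℕ → ℝ)
    (hy : ∀ n, 0 < y n) (hy0 : Tendsto y atTop (𝓝 0))
    (hx : ∀ n, |x n| ≤ c * Real.sqrt (y n)) :
    ∀ ε > (0:ℝ), ∀ᶠ n in atTop,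
      1 / Real.pi - ε ≤
        ‖UHG φ ((x n : ℂ) + (y n : ℂ) * Complex.I)‖ / Real.log (1 / y n) := by
  intro ε hε
  set C := Real.log (c ^ 2 + 1) + 11
  have hL : Tendsto (fun n => Real.log (1 / y n)) atTop atTop := by
    have hy0' : Tendsto y atTop (𝓝[>] 0) :=
      tendsto_nhdsWithin_of_tendsto_nhds_of_eventually_within _ hy0 (Eventually.of_forall hy)
    simpa only [one_div, Function.comp_def] using Real.tendsto_log_atTop.comp (tendsto_inv_nhdsGT_zero.comp hy0')
  have hx0 : Tendsto (fun n => c * √(y n)) atTop (𝓝 0) := by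
    simpa using hy0.sqrt.const_mul c
  filter_upwards [hx0.eventually_le_const (by norm_num : (0 : ℝ) < 1 / 2),
    hy0.eventually_le_const one_pos, hL.eventually_gt_atTop 0,
    ((tendsto_const_nhds (x := C / π)).div_atTop hL).eventually_lt_const hε]
    with n hxn hyn hLpos hCε
  have hbound : Real.log (1 / y n) - C ≤ π * ‖UHG φ ((x n : ℂ) + (y n : ℂ) * I)‖ := by
    have := hφ.neg_log_normSq_sub_le_pi_mul_norm_UHG (z := (x n : ℂ) + (y n : ℂ) * I)
      (by simpa using (hy n).ne') (by simpa using (hx n).trans hxn)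
    rw [normSq_add_mul_I] at this
    linarith [log_sq_add_sq_le (hy n) hyn (hx n)]
  rw [div_lt_iff₀ hLpos] at hCε
  have hdiv := (div_le_iff₀' pi_pos).2 hbound
  rw [sub_div] at hdiv
  rw [le_div_iff₀ hLpos, sub_mul, one_div_mul_eq_div]
  linarith

/-- **First case of the construction.** If `|x n| ≤ c√(y n)` with `y n → 0`, then
`liminf |G_φ(x n + i y n)| / log(1/y n) ≥ 1/π`. -/
theorem stmt_12 (φ : ℝ → ℝ) (hφ : IsPhi φ) (c : ℝ) (hc : 0 < c) (x y : ℕ → ℝ)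
    (hy : ∀ n, 0 < y n) (hy0 : Tendsto y atTop (𝓝 0))
    (hx : ∀ n, |x n| ≤ c * Real.sqrt (y n)) :
    ∀ ε > (0:ℝ), ∀ᶠ n in atTop,
      1 / Real.pi - ε ≤
        ‖UHG φ ((x n : ℂ) + (y n : ℂ) * Complex.I)‖ / Real.log (1 / y n) :=
  stmt_12_general φ hφ c x y hy hy0 hx
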